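/- arXiv:0808.3033 — 2 statements merged into one kernel-verified Lean document; each statement's English description precedes it below -/
import Mathlib

section
/- Let R be a normalized root system in ℝⁿ with positive subsystem R₊, and let k : R → [0,∞) be W-invariant. Define, for x in the Weyl chamber C, δ̄(x) = (∏_{α∈R₊, k(α)≠1/2} ⟨α,x⟩^{1−2k(α)}) · log(∏_{α∈R₊, k(α)=1/2} ⟨α,x⟩). Then δ̄ is harmonic on C for the radial Dunkl generator: for every x ∈ C, (1/2)Δδ̄(x) + Σ_{α∈R₊} k(α)·⟨∇δ̄(x),α⟩/⟨x,α⟩ = 0. -/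
open scoped RealInnerProductSpace BigOperators

/-- Reflection `σ_α` with respect to the hyperplane orthogonal to `α`:
`σ_α(x) = x - 2(⟨α,x⟩/⟨α,α⟩)α`. -/
noncomputable def rootReflection {n : ℕ} (α x : EuclideanSpace ℝ (Fin n)) :
    EuclideanSpace ℝ (Fin n) :=
  x - (2 * ⟪α, x⟫ / ⟪α, α⟫) • α

/-- Euclidean Laplacian, as the sum of pure second derivatives in the coordinate directions. -/
noncomputable def laplacian {n : ℕ} (f : EuclideanSpace ℝ (Fin n) → ℝ)
    (x : EuclideanSpace ℝ (Fin n)) : ℝ :=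
  ∑ i : Fin n,
    iteratedFDeriv ℝ 2 f x ![EuclideanSpace.single i 1, EuclideanSpace.single i 1]

/-- `R` is a (restricted) root system in `ℝⁿ`: a finite set of nonzero vectors such that
`R ∩ ℝα = {α, -α}` and `σ_α(R) = R` for all `α ∈ R`. -/
def IsRootSystem {n : ℕ} (R : Finset (EuclideanSpace ℝ (Fin n))) : Prop :=
  (∀ α ∈ R, α ≠ 0) ∧ (∀ α ∈ R, -α ∈ R) ∧
    (∀ α ∈ R, ∀ c : ℝ, c • α ∈ R → c • α = α ∨ c • α = -α) ∧
    (∀ α ∈ R, ∀ β ∈ R, rootReflection α β ∈ R)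

/-- `Rp` is a positive subsystem of `R`: it contains exactly one of `α, -α` for each `α ∈ R`. -/
def IsPositiveSubsystem {n : ℕ} (R Rp : Finset (EuclideanSpace ℝ (Fin n))) : Prop :=
  Rp ⊆ R ∧ ∀ α ∈ R, Xor' (α ∈ Rp) (-α ∈ Rp)

open scoped Classical

/-!
On the Weyl chamber, `δ̄ = exp (∑ c α log ⟪α, ·⟫) * ∑ b α log ⟪α, ·⟫` with `c = 1 - 2k` and `b` the
indicator of `k = 1/2`. Applying `(1/2) Δ + ∑ k γ ∂_γ / ⟪γ, ·⟫`, the terms involving a single root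
cancel because `c = 1 - 2k` and `c b = 0`, and what is left is a multiple of a cross sum
`∑_{α ≠ β} F (α, β) ⟪α, β⟫ / (⟪α, x⟫ ⟪β, x⟫)` with `F` built from `W`-invariant functions.
Multiplied by `∏_{α ∈ R₊} ⟪α, x⟫`, the cross sum becomes a polynomial of degree `|R₊| - 2`. Each
reflection `σ_δ` permutes the linear forms `⟪α, ·⟫`, `α ∈ R₊`, up to an odd number of sign changes,
so this polynomial is anti-invariant under `σ_δ` and vanishes on the hyperplane `δᗮ`. Vanishing on
`|R₊|` distinct hyperplanes, it vanishes on a generic line, hence identically.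
-/

open Finset Topology

namespace Finset

variable {ι : Type*} [DecidableEq ι]

theorem sum_offDiag_eq_sum_sum_erase {M : Type*} [AddCommMonoid M] (s : Finset ι)
    (g : ι × ι → M) : ∑ p ∈ s.offDiag, g p = ∑ a ∈ s, ∑ b ∈ s.erase a, g (a, b) := by
  have hs : s.offDiag = (s ×ˢ s).filter fun p => p.1 ≠ p.2 := by
    ext p
    simp [and_assoc]
  rw [hs, sum_filter, sum_product]
  refine sum_congr rfl fun a _ => ?_
  rw [← filter_ne, sum_filter]

theorem prod_sdiff_pair_eq_neg {A : Type*} [CommRing A] {s : Finset ι} {ε : ι → A}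
    (hε : ∀ i ∈ s, ε i * ε i = 1) (hprod : ∏ i ∈ s, ε i = -1) {a b : ι} (ha : a ∈ s)
    (hb : b ∈ s) (hab : a ≠ b) :
    ∏ i ∈ s \ {a, b}, ε i = -(ε a * ε b) := by
  have h := prod_sdiff (f := ε) (insert_subset ha (singleton_subset_iff.2 hb))
  rw [prod_pair hab, hprod] at h
  linear_combination (ε a * ε b) * h - (∏ i ∈ s \ {a, b}, ε i) * ε b ^ 2 * hε a ha -
    (∏ i ∈ s \ {a, b}, ε i) * hε b hb

theorem prod_sdiff_pair_comp_involution {M : Type*} [CommMonoid M] {s : Finset ι} {e : ι → ι}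
    (he : ∀ i ∈ s, e i ∈ s) (hee : ∀ i ∈ s, e (e i) = i) (f : ι → M) {a b : ι} (ha : a ∈ s)
    (hb : b ∈ s) : ∏ i ∈ s \ {a, b}, f (e i) = ∏ i ∈ s \ {e a, e b}, f i := by
  have he_inj : ∀ i ∈ s, ∀ j ∈ s, e i = e j → i = j := fun i hi j hj h => by
    rw [← hee i hi, h, hee j hj]
  have hmaps : ∀ {a b}, a ∈ s → b ∈ s → ∀ i ∈ s \ {a, b}, e i ∈ s \ {e a, e b} := by
    intro a b ha hb i hi
    simp only [mem_sdiff, mem_insert, mem_singleton, not_or] at hi ⊢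
    exact ⟨he i hi.1, fun h => hi.2.1 (he_inj i hi.1 a ha h),
      fun h => hi.2.2 (he_inj i hi.1 b hb h)⟩
  refine prod_nbij' e e (hmaps ha hb) (fun i hi => ?_) (fun i hi => hee i (mem_sdiff.1 hi).1)
    (fun i hi => hee i (mem_sdiff.1 hi).1) fun _ _ => rfl
  simpa only [hee a ha, hee b hb] using hmaps (he a ha) (he b hb) i hi

end Finset

section LinearForms

variable {E : Type*} [NormedAddCommGroup E] [InnerProductSpace ℝ E]

theorem exists_forall_inner_ne_zero (W : Finset E) (hW : ∀ w ∈ W, w ≠ 0) :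
    ∃ v : E, ∀ w ∈ W, ⟪w, v⟫ ≠ 0 := by
  by_contra! h
  have hcover : ⋃ w : W, ((LinearMap.ker (innerₛₗ ℝ (w : E)) : Submodule ℝ E) : Set E) =
      Set.univ := by
    refine Set.eq_univ_of_forall fun v => ?_
    obtain ⟨w, hw, hwv⟩ := h v
    exact Set.mem_iUnion.2 ⟨⟨w, hw⟩, hwv⟩
  obtain ⟨⟨w, hw⟩, htop⟩ := Subspace.exists_eq_top_of_iUnion_eq_univ hcover
  have hww : ⟪w, w⟫ = 0 := by
    simpa using (htop ▸ Submodule.mem_top : w ∈ LinearMap.ker (innerₛₗ ℝ w))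
  exact hW w hw (inner_self_eq_zero.1 hww)

/-- A direction `v` along which the line `x + r • v` meets the hyperplanes `δᗮ`, `δ ∈ L`, at
pairwise distinct parameters `r = -⟪δ, x⟫ / ⟪δ, v⟫`. -/
theorem exists_injOn_inner_div {L : Finset E} {x : E} (hx : ∀ δ ∈ L, ⟪δ, x⟫ ≠ 0)
    (hL : ∀ δ ∈ L, ∀ δ' ∈ L, δ ≠ δ' → ∀ r : ℝ, δ' ≠ r • δ) :
    ∃ v : E, (∀ δ ∈ L, ⟪δ, v⟫ ≠ 0) ∧ Set.InjOn (fun δ => ⟪δ, x⟫ / ⟪δ, v⟫) L := by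
  have hcross : ∀ p ∈ L.offDiag, ⟪p.1, x⟫ • p.2 - ⟪p.2, x⟫ • p.1 ≠ 0 := by
    intro p hp h
    obtain ⟨h1, h2, hne⟩ := mem_offDiag.1 hp
    refine hL p.1 h1 p.2 h2 hne (⟪p.2, x⟫ / ⟪p.1, x⟫) ?_
    rw [div_eq_inv_mul, mul_smul, ← sub_eq_zero.1 h, smul_smul, inv_mul_cancel₀ (hx _ h1),
      one_smul]
  obtain ⟨v, hv⟩ := exists_forall_inner_ne_zero
    (L ∪ L.offDiag.image fun p => ⟪p.1, x⟫ • p.2 - ⟪p.2, x⟫ • p.1) <| by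
      simp only [mem_union, mem_image]
      rintro w (hw | ⟨p, hp, rfl⟩)
      · exact fun h => hx w hw (by simp [h])
      · exact hcross p hp
  have hvL : ∀ δ ∈ L, ⟪δ, v⟫ ≠ 0 := fun δ hδ => hv δ (mem_union_left _ hδ)
  refine ⟨v, hvL, fun δ hδ δ' hδ' heq => ?_⟩
  by_contra hne
  have hp : (δ, δ') ∈ L.offDiag := mem_offDiag.2 ⟨hδ, hδ', hne⟩
  have h := hv _ (mem_union_right _ (mem_image_of_mem _ hp))
  rw [div_eq_div_iff (hvL δ hδ) (hvL δ' hδ')] at heq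
  simp only [inner_sub_left, inner_smul_left, RCLike.conj_to_real] at h
  exact h (by linarith)

/-- On the line `x + r • v` a sum of products of at most `D` linear forms is a polynomial in `r` of
degree at most `D`, with a root wherever the line crosses one of the hyperplanes `δᗮ`. -/
theorem sum_mul_prod_inner_eq_zero {ι : Type*} (T : Finset ι) (c : ι → ℝ) (m : ι → Finset E)
    (L : Finset E) (D : ℕ) (hm : ∀ t ∈ T, (m t).card ≤ D) (hD : D < L.card)
    (hL : ∀ δ ∈ L, ∀ δ' ∈ L, δ ≠ δ' → ∀ r : ℝ, δ' ≠ r • δ)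
    (hvan : ∀ y : E, (∃ δ ∈ L, ⟪δ, y⟫ = 0) → ∑ t ∈ T, c t * ∏ γ ∈ m t, ⟪γ, y⟫ = 0)
    (x : E) : ∑ t ∈ T, c t * ∏ γ ∈ m t, ⟪γ, x⟫ = 0 := by
  by_cases hxL : ∃ δ ∈ L, ⟪δ, x⟫ = 0
  · exact hvan x hxL
  push Not at hxL
  obtain ⟨v, hvL, hinj⟩ := exists_injOn_inner_div hxL hL
  let Q : Polynomial ℝ := ∑ t ∈ T, Polynomial.C (c t) *
    ∏ γ ∈ m t, (Polynomial.C ⟪γ, v⟫ * Polynomial.X + Polynomial.C ⟪γ, x⟫)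
  have hQ : ∀ r : ℝ, Q.eval r = ∑ t ∈ T, c t * ∏ γ ∈ m t, ⟪γ, x + r • v⟫ := by
    intro r
    simp only [Q, Polynomial.eval_finsetSum, Polynomial.eval_mul, Polynomial.eval_C,
      Polynomial.eval_prod, Polynomial.eval_add, Polynomial.eval_X, inner_add_right,
      inner_smul_right]
    congr! 3
    ring
  have hQdeg : Q.natDegree < (L.image fun δ => -(⟪δ, x⟫ / ⟪δ, v⟫)).card := by
    rw [card_image_of_injOn (f := fun δ => -(⟪δ, x⟫ / ⟪δ, v⟫)) (neg_injective.comp_injOn hinj)]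
    refine lt_of_le_of_lt (Polynomial.natDegree_sum_le_of_forall_le _ _ fun t ht => ?_) hD
    refine (Polynomial.natDegree_C_mul_le _ _).trans <| (Polynomial.natDegree_prod_le _ _).trans ?_
    refine (sum_le_card_nsmul _ _ 1 fun γ _ => Polynomial.natDegree_linear_le).trans ?_
    simpa using hm t ht
  have hQ0 : Q = 0 := by
    refine Polynomial.eq_zero_of_natDegree_lt_card_of_eval_eq_zero' Q _ ?_ hQdeg
    simp only [mem_image]
    rintro _ ⟨δ, hδ, rfl⟩
    rw [hQ]
    refine hvan _ ⟨δ, hδ, ?_⟩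
    rw [inner_add_right, inner_smul_right, neg_mul, div_mul_cancel₀ _ (hvL δ hδ), add_neg_cancel]
  simpa [hQ0] using (hQ 0).symm

end LinearForms

section CrossNumerator

variable {E : Type*} [NormedAddCommGroup E] [InnerProductSpace ℝ E] [DecidableEq E]

/-- `∏_{γ ∈ s} ⟪γ, y⟫` times `∑_{α ≠ β} F (α, β) ⟪α, β⟫ / (⟪α, y⟫ ⟪β, y⟫)`, written without
denominators. -/
noncomputable def crossNumerator (s : Finset E) (F : E × E → ℝ) (y : E) : ℝ :=
  ∑ p ∈ s.offDiag, F p * ⟪p.1, p.2⟫ * ∏ γ ∈ s \ {p.1, p.2}, ⟪γ, y⟫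

theorem crossNumerator_eq_prod_mul_sum (s : Finset E) (F : E × E → ℝ) {y : E}
    (hy : ∀ γ ∈ s, ⟪γ, y⟫ ≠ 0) :
    crossNumerator s F y = (∏ γ ∈ s, ⟪γ, y⟫) *
      ∑ p ∈ s.offDiag, F p * (⟪p.1, p.2⟫ / (⟪p.1, y⟫ * ⟪p.2, y⟫)) := by
  rw [crossNumerator, mul_sum]
  refine sum_congr rfl fun p hp => ?_
  obtain ⟨h1, h2, hne⟩ := mem_offDiag.1 hp
  rw [← prod_sdiff (insert_subset h1 (singleton_subset_iff.2 h2)), prod_pair hne]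
  field_simp [hy _ h1, hy _ h2]

theorem crossNumerator_eq_neg (s : Finset E) (F : E × E → ℝ) (e : E → E) (ε : E → ℝ)
    (he : ∀ γ ∈ s, e γ ∈ s) (hee : ∀ γ ∈ s, e (e γ) = γ) (hε : ∀ γ ∈ s, ε γ * ε γ = 1)
    (hprod : ∏ γ ∈ s, ε γ = -1)
    (hinner : ∀ α ∈ s, ∀ β ∈ s, ⟪α, β⟫ = ε α * ε β * ⟪e α, e β⟫)
    (hF : ∀ α ∈ s, ∀ β ∈ s, F (e α, e β) = F (α, β)) {y z : E}
    (hz : ∀ γ ∈ s, ⟪γ, z⟫ = ε γ * ⟪e γ, y⟫) :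
    crossNumerator s F z = -crossNumerator s F y := by
  have he_offDiag : ∀ p ∈ s.offDiag, (e p.1, e p.2) ∈ s.offDiag := fun p hp => by
    obtain ⟨h1, h2, hne⟩ := mem_offDiag.1 hp
    refine mem_offDiag.2 ⟨he _ h1, he _ h2, fun h => hne ?_⟩
    rw [← hee _ h1, show e p.1 = e p.2 from h, hee _ h2]
  rw [crossNumerator, crossNumerator, ← sum_neg_distrib]
  refine sum_nbij' (fun p => (e p.1, e p.2)) (fun p => (e p.1, e p.2)) he_offDiag he_offDiag
    (fun p hp => ?_) (fun p hp => ?_) fun p hp => ?_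
  all_goals obtain ⟨h1, h2, hne⟩ := mem_offDiag.1 hp
  · simp [hee _ h1, hee _ h2]
  · simp [hee _ h1, hee _ h2]
  · rw [prod_congr rfl fun γ hγ => hz γ (mem_sdiff.1 hγ).1, prod_mul_distrib,
      prod_sdiff_pair_eq_neg hε hprod h1 h2 hne,
      prod_sdiff_pair_comp_involution he hee (fun γ => ⟪γ, y⟫) h1 h2, hinner _ h1 _ h2,
      ← hF _ h1 _ h2]
    linear_combination (-(F (e p.1, e p.2) * ⟪e p.1, e p.2⟫ *
      ∏ γ ∈ s \ {e p.1, e p.2}, ⟪γ, y⟫)) * (ε p.2 ^ 2 * hε _ h1 + hε _ h2)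

end CrossNumerator

section Reflection

variable {n : ℕ}

theorem rootReflection_self {α : EuclideanSpace ℝ (Fin n)} (hα : α ≠ 0) :
    rootReflection α α = -α := by
  rw [rootReflection, mul_div_assoc, div_self ((inner_self_ne_zero (𝕜 := ℝ)).2 hα)]
  module

theorem inner_rootReflection_left (α x y : EuclideanSpace ℝ (Fin n)) :
    ⟪rootReflection α x, y⟫ = ⟪x, rootReflection α y⟫ := by
  simp only [rootReflection, inner_sub_left, inner_sub_right, inner_smul_left,
    inner_smul_right, RCLike.conj_to_real, real_inner_comm α x]
  ring

theorem rootReflection_rootReflection {α : EuclideanSpace ℝ (Fin n)} (hα : α ≠ 0)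
    (x : EuclideanSpace ℝ (Fin n)) : rootReflection α (rootReflection α x) = x := by
  have h := (inner_self_ne_zero (𝕜 := ℝ)).2 hα
  simp only [rootReflection, inner_sub_right, inner_smul_right]
  rw [show 2 * (⟪α, x⟫ - 2 * ⟪α, x⟫ / ⟪α, α⟫ * ⟪α, α⟫) / ⟪α, α⟫ = -(2 * ⟪α, x⟫ / ⟪α, α⟫) by
    field_simp; ring]
  module

theorem inner_rootReflection_rootReflection {α : EuclideanSpace ℝ (Fin n)} (hα : α ≠ 0)
    (x y : EuclideanSpace ℝ (Fin n)) : ⟪rootReflection α x, rootReflection α y⟫ = ⟪x, y⟫ := by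
  rw [inner_rootReflection_left, rootReflection_rootReflection hα]

theorem rootReflection_of_inner_eq_zero {α x : EuclideanSpace ℝ (Fin n)} (h : ⟪α, x⟫ = 0) :
    rootReflection α x = x := by
  simp [rootReflection, h]

theorem rootReflection_neg (α x : EuclideanSpace ℝ (Fin n)) :
    rootReflection α (-x) = -rootReflection α x := by
  simp only [rootReflection, inner_neg_right]
  module

theorem eq_smul_of_rootReflection_eq_neg {α x : EuclideanSpace ℝ (Fin n)}
    (h : rootReflection α x = -x) : x = (⟪α, x⟫ / ⟪α, α⟫) • α := by
  rw [rootReflection, sub_eq_iff_eq_add] at h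
  calc x = (1 / 2 : ℝ) • (x + x) := by module
    _ = _ := by rw [add_eq_of_eq_neg_add h]; module

end Reflection

section PositiveRoots

variable {n : ℕ} {R Rp : Finset (EuclideanSpace ℝ (Fin n))}

theorem IsPositiveSubsystem.neg_notMem (hRp : IsPositiveSubsystem R Rp)
    {α : EuclideanSpace ℝ (Fin n)} (hα : α ∈ Rp) : -α ∉ Rp :=
  (xor_iff_iff_not.1 (hRp.2 α (hRp.1 hα))).1 hα

theorem IsPositiveSubsystem.mem_or_neg_mem (hRp : IsPositiveSubsystem R Rp)
    {α : EuclideanSpace ℝ (Fin n)} (hα : α ∈ R) : α ∈ Rp ∨ -α ∈ Rp :=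
  ((xor_iff_or_and_not_and _ _).1 (hRp.2 α hα)).1

theorem IsPositiveSubsystem.ne_smul (hR : IsRootSystem R) (hRp : IsPositiveSubsystem R Rp)
    {α β : EuclideanSpace ℝ (Fin n)} (hα : α ∈ Rp) (hβ : β ∈ Rp) (hne : α ≠ β) (r : ℝ) :
    β ≠ r • α := by
  rintro rfl
  rcases hR.2.2.1 α (hRp.1 hα) r (hRp.1 hβ) with h | h
  · exact hne h.symm
  · exact hRp.neg_notMem hα (h ▸ hβ)

noncomputable def posReflect (Rp : Finset (EuclideanSpace ℝ (Fin n)))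
    (δ γ : EuclideanSpace ℝ (Fin n)) : EuclideanSpace ℝ (Fin n) :=
  if rootReflection δ γ ∈ Rp then rootReflection δ γ else -rootReflection δ γ

noncomputable def reflectSign (Rp : Finset (EuclideanSpace ℝ (Fin n)))
    (δ γ : EuclideanSpace ℝ (Fin n)) : ℝ :=
  if rootReflection δ γ ∈ Rp then 1 else -1

theorem rootReflection_eq_reflectSign_smul (δ γ : EuclideanSpace ℝ (Fin n)) :
    rootReflection δ γ = reflectSign Rp δ γ • posReflect Rp δ γ := by
  unfold reflectSign posReflect
  split_ifs <;> simp

theorem reflectSign_mul_self (δ γ : EuclideanSpace ℝ (Fin n)) :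
    reflectSign Rp δ γ * reflectSign Rp δ γ = 1 := by
  unfold reflectSign
  split_ifs <;> norm_num

theorem inner_rootReflection_right_eq (δ γ y : EuclideanSpace ℝ (Fin n)) :
    ⟪γ, rootReflection δ y⟫ = reflectSign Rp δ γ * ⟪posReflect Rp δ γ, y⟫ := by
  rw [← inner_rootReflection_left, rootReflection_eq_reflectSign_smul (Rp := Rp), inner_smul_left,
    RCLike.conj_to_real]

theorem inner_eq_reflectSign_mul {δ : EuclideanSpace ℝ (Fin n)} (hδ : δ ≠ 0)
    (α β : EuclideanSpace ℝ (Fin n)) :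
    ⟪α, β⟫ = reflectSign Rp δ α * reflectSign Rp δ β * ⟪posReflect Rp δ α, posReflect Rp δ β⟫ := by
  rw [← inner_rootReflection_rootReflection hδ, rootReflection_eq_reflectSign_smul (Rp := Rp) δ α,
    rootReflection_eq_reflectSign_smul (Rp := Rp) δ β, inner_smul_left, inner_smul_right,
    RCLike.conj_to_real, mul_assoc]

theorem apply_posReflect_eq (hR : IsRootSystem R) {g : EuclideanSpace ℝ (Fin n) → ℝ}
    (hg : ∀ α ∈ R, ∀ β ∈ R, g (rootReflection β α) = g α) {δ γ : EuclideanSpace ℝ (Fin n)}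
    (hδ : δ ∈ R) (hγ : γ ∈ R) : g (posReflect Rp δ γ) = g γ := by
  have hσ := hR.2.2.2 δ hδ γ hγ
  unfold posReflect
  split_ifs
  · exact hg γ hγ δ hδ
  · rw [← rootReflection_self (hR.1 _ hσ), hg _ hσ _ hσ, hg γ hγ δ hδ]

variable (hR : IsRootSystem R) (hRp : IsPositiveSubsystem R Rp) {δ : EuclideanSpace ℝ (Fin n)}
include hR hRp

theorem posReflect_mem (hδ : δ ∈ R) {γ : EuclideanSpace ℝ (Fin n)} (hγ : γ ∈ Rp) :
    posReflect Rp δ γ ∈ Rp := by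
  unfold posReflect
  split_ifs with h
  · exact h
  · exact (hRp.mem_or_neg_mem (hR.2.2.2 δ hδ γ (hRp.1 hγ))).resolve_left h

theorem posReflect_posReflect (hδ : δ ∈ R) {γ : EuclideanSpace ℝ (Fin n)} (hγ : γ ∈ Rp) :
    posReflect Rp δ (posReflect Rp δ γ) = γ := by
  have hσσ := rootReflection_rootReflection (hR.1 δ hδ) γ
  unfold posReflect
  by_cases h : rootReflection δ γ ∈ Rp
  · simp [h, hσσ, hγ]
  · simp [h, rootReflection_neg, hσσ, hRp.neg_notMem hγ]

theorem reflectSign_posReflect (hδ : δ ∈ R) {γ : EuclideanSpace ℝ (Fin n)} (hγ : γ ∈ Rp) :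
    reflectSign Rp δ (posReflect Rp δ γ) = reflectSign Rp δ γ := by
  have hσσ := rootReflection_rootReflection (hR.1 δ hδ) γ
  unfold reflectSign posReflect
  by_cases h : rootReflection δ γ ∈ Rp
  · simp [h, hσσ, hγ]
  · simp [h, rootReflection_neg, hσσ, hRp.neg_notMem hγ]

theorem eq_of_rootReflection_eq_neg (hδ : δ ∈ Rp) {γ : EuclideanSpace ℝ (Fin n)} (hγ : γ ∈ Rp)
    (h : rootReflection δ γ = -γ) : γ = δ := by
  by_contra hne
  exact hRp.ne_smul hR hδ hγ (Ne.symm hne) _ (eq_smul_of_rootReflection_eq_neg h)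

/-- The positive roots other than `δ` made negative by `σ_δ` come in pairs
`γ ≠ posReflect Rp δ γ`; `δ` itself is the odd one out. -/
theorem prod_reflectSign (hδ : δ ∈ Rp) : ∏ γ ∈ Rp, reflectSign Rp δ γ = -1 := by
  have hδ0 := hR.1 δ (hRp.1 hδ)
  have hδδ : posReflect Rp δ δ = δ := by
    simp [posReflect, rootReflection_self hδ0, hRp.neg_notMem hδ]
  have hεδ : reflectSign Rp δ δ = -1 := by
    simp [reflectSign, rootReflection_self hδ0, hRp.neg_notMem hδ]
  have hpp : ∀ γ ∈ Rp.erase δ, posReflect Rp δ (posReflect Rp δ γ) = γ := fun γ hγ =>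
    posReflect_posReflect hR hRp (hRp.1 hδ) (mem_of_mem_erase hγ)
  rw [← mul_prod_erase _ _ hδ, hεδ, neg_one_mul, neg_inj]
  refine prod_involution (fun γ _ => posReflect Rp δ γ) (fun γ hγ => ?_) (fun γ hγ hε => ?_)
    (fun γ hγ => ?_) hpp
  · rw [reflectSign_posReflect hR hRp (hRp.1 hδ) (mem_of_mem_erase hγ), reflectSign_mul_self]
  · intro hfix
    refine ne_of_mem_erase hγ (eq_of_rootReflection_eq_neg hR hRp hδ (mem_of_mem_erase hγ) ?_)
    unfold reflectSign at hε
    unfold posReflect at hfix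
    split_ifs at hε hfix
    · exact absurd rfl hε
    · exact neg_eq_iff_eq_neg.1 hfix
  · refine mem_erase.2 ⟨fun h => ne_of_mem_erase hγ ?_,
      posReflect_mem hR hRp (hRp.1 hδ) (mem_of_mem_erase hγ)⟩
    rw [← hpp γ hγ, h, hδδ]

end PositiveRoots

section Cancellation

variable {n : ℕ} {R Rp : Finset (EuclideanSpace ℝ (Fin n))} (hR : IsRootSystem R)
  (hRp : IsPositiveSubsystem R Rp) (F : EuclideanSpace ℝ (Fin n) × EuclideanSpace ℝ (Fin n) → ℝ)
  (hF : ∀ δ ∈ Rp, ∀ α ∈ Rp, ∀ β ∈ Rp, F (posReflect Rp δ α, posReflect Rp δ β) = F (α, β))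
include hR hRp hF

/-- `σ_δ` fixes `y ∈ δᗮ`, while the cross numerator is anti-invariant under `σ_δ`. -/
theorem crossNumerator_eq_zero_of_inner_eq_zero {δ y : EuclideanSpace ℝ (Fin n)} (hδ : δ ∈ Rp)
    (hy : ⟪δ, y⟫ = 0) : crossNumerator Rp F y = 0 := by
  have hδR := hRp.1 hδ
  have h := crossNumerator_eq_neg Rp F (posReflect Rp δ) (reflectSign Rp δ)
    (fun γ hγ => posReflect_mem hR hRp hδR hγ) (fun γ hγ => posReflect_posReflect hR hRp hδR hγ)
    (fun γ _ => reflectSign_mul_self δ γ) (prod_reflectSign hR hRp hδ)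
    (fun α _ β _ => inner_eq_reflectSign_mul (hR.1 δ hδR) α β) (hF δ hδ) (y := y) (z := y)
    fun γ _ => by rw [← inner_rootReflection_right_eq, rootReflection_of_inner_eq_zero hy]
  linarith

theorem crossNumerator_eq_zero (y : EuclideanSpace ℝ (Fin n)) : crossNumerator Rp F y = 0 := by
  rcases Rp.eq_empty_or_nonempty with rfl | hne
  · simp [crossNumerator]
  refine sum_mul_prod_inner_eq_zero Rp.offDiag (fun p => F p * ⟪p.1, p.2⟫)
    (fun p => Rp \ {p.1, p.2}) Rp (Rp.card - 1) (fun p hp => ?_) (by have := hne.card_pos; omega)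
    (fun δ hδ δ' hδ' hne r => hRp.ne_smul hR hδ hδ' hne r)
    (fun y ⟨δ, hδ, hy⟩ => crossNumerator_eq_zero_of_inner_eq_zero hR hRp F hF hδ hy) y
  rw [← card_erase_of_mem (mem_offDiag.1 hp).1]
  refine card_le_card fun γ hγ => ?_
  simp only [mem_sdiff, mem_insert, not_or] at hγ
  exact mem_erase.2 ⟨hγ.2.1, hγ.1⟩

theorem sum_offDiag_mul_inner_div_eq_zero {x : EuclideanSpace ℝ (Fin n)}
    (hx : ∀ γ ∈ Rp, ⟪γ, x⟫ ≠ 0) :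
    ∑ p ∈ Rp.offDiag, F p * (⟪p.1, p.2⟫ / (⟪p.1, x⟫ * ⟪p.2, x⟫)) = 0 := by
  have h := crossNumerator_eq_prod_mul_sum Rp F hx
  rw [crossNumerator_eq_zero hR hRp F hF] at h
  exact (mul_eq_zero.1 h.symm).resolve_left (prod_ne_zero_iff.2 hx)

end Cancellation

section Calculus

variable {E : Type*} [NormedAddCommGroup E] [InnerProductSpace ℝ E] (s : Finset E)

/-- `log ∏_{γ ∈ s} ⟪γ, y⟫ ^ w γ` where all `⟪γ, y⟫ > 0`. -/
noncomputable def sumLogInner (w : E → ℝ) (y : E) : ℝ :=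
  ∑ γ ∈ s, w γ * Real.log ⟪γ, y⟫

/-- The coefficient of `γ` in the gradient of `exp (sumLogInner s c) * sumLogInner s b`. -/
noncomputable def gradCoeff (c b : E → ℝ) (γ y : E) : ℝ :=
  Real.exp (sumLogInner s c y) * (c γ * sumLogInner s b y + b γ) * (⟪γ, y⟫)⁻¹

variable {s}

theorem hasFDerivAt_sumLogInner (w : E → ℝ) {x : E} (hx : ∀ γ ∈ s, ⟪γ, x⟫ ≠ 0) :
    HasFDerivAt (sumLogInner s w) (∑ γ ∈ s, (w γ / ⟪γ, x⟫) • innerSL ℝ γ) x := by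
  refine HasFDerivAt.fun_sum fun γ hγ => ?_
  refine (((innerSL ℝ γ).hasFDerivAt.log (hx γ hγ)).const_mul (w γ)).congr_fderiv ?_
  ext v
  simp [div_eq_mul_inv, mul_assoc]

theorem hasFDerivAt_exp_sumLogInner_mul (c b : E → ℝ) {x : E} (hx : ∀ γ ∈ s, ⟪γ, x⟫ ≠ 0) :
    HasFDerivAt (fun y => Real.exp (sumLogInner s c y) * sumLogInner s b y)
      (∑ γ ∈ s, gradCoeff s c b γ x • innerSL ℝ γ) x := by
  refine ((hasFDerivAt_sumLogInner c hx).exp.mul (hasFDerivAt_sumLogInner b hx)).congr_fderiv ?_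
  ext v
  simp only [add_apply, smul_apply, _root_.sum_apply, coe_innerSL_apply, smul_eq_mul, mul_sum,
    ← sum_add_distrib, gradCoeff]
  refine sum_congr rfl fun γ _ => ?_
  ring

theorem hasFDerivAt_gradCoeff (c b : E → ℝ) (γ : E) {x : E} (hx : ∀ α ∈ s, ⟪α, x⟫ ≠ 0)
    (hγ : ⟪γ, x⟫ ≠ 0) :
    HasFDerivAt (gradCoeff s c b γ)
      (Real.exp (sumLogInner s c x) •
        (∑ α ∈ s, ((c α * (c γ * sumLogInner s b x + b γ) + c γ * b α) / (⟪α, x⟫ * ⟪γ, x⟫)) •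
            innerSL ℝ α
          - ((c γ * sumLogInner s b x + b γ) / (⟪γ, x⟫ * ⟪γ, x⟫)) • innerSL ℝ γ)) x := by
  have hinv := (hasDerivAt_inv hγ).comp_hasFDerivAt x (innerSL ℝ γ).hasFDerivAt
  refine (((hasFDerivAt_sumLogInner c hx).exp.mul (((hasFDerivAt_sumLogInner b hx).const_mul
    (c γ)).add_const (b γ))).mul hinv).congr_fderiv ?_
  ext v
  have hsum : ∑ α ∈ s, (c α * (c γ * sumLogInner s b x + b γ) + c γ * b α) /
        (⟪α, x⟫ * ⟪γ, x⟫) * ⟪α, v⟫ =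
      (c γ * sumLogInner s b x + b γ) / ⟪γ, x⟫ * ∑ α ∈ s, c α / ⟪α, x⟫ * ⟪α, v⟫ +
        c γ / ⟪γ, x⟫ * ∑ α ∈ s, b α / ⟪α, x⟫ * ⟪α, v⟫ := by
    rw [mul_sum, mul_sum, ← sum_add_distrib]
    refine sum_congr rfl fun α hα => ?_
    field_simp [hx α hα]
  simp only [Pi.mul_apply, neg_smul, smul_neg, Function.comp_apply, smul_add, add_apply,
    neg_apply, smul_apply, coe_innerSL_apply, smul_eq_mul, _root_.sum_apply, sub_apply, hsum]
  field_simp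
  ring

end Calculus

section Generator

variable {n : ℕ}

theorem laplacian_eq_sum_of_eventually_hasFDerivAt {f : EuclideanSpace ℝ (Fin n) → ℝ}
    {x : EuclideanSpace ℝ (Fin n)} {ι : Type*} (s : Finset ι) (v : ι → EuclideanSpace ℝ (Fin n))
    (φ : ι → EuclideanSpace ℝ (Fin n) → ℝ) (φ' : ι → EuclideanSpace ℝ (Fin n) →L[ℝ] ℝ)
    (hf : ∀ᶠ y in 𝓝 x, HasFDerivAt f (∑ i ∈ s, φ i y • innerSL ℝ (v i)) y)
    (hφ : ∀ i ∈ s, HasFDerivAt (φ i) (φ' i) x) :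
    laplacian f x = ∑ i ∈ s, φ' i (v i) := by
  have hD : HasFDerivAt (fderiv ℝ f) (∑ i ∈ s, (φ' i).smulRight (innerSL ℝ (v i))) x :=
    (HasFDerivAt.fun_sum fun i hi => (hφ i hi).smul_const (innerSL ℝ (v i))).congr_of_eventuallyEq
      (hf.mono fun y hy => hy.fderiv)
  have hbasis : ∀ w : EuclideanSpace ℝ (Fin n),
      ∑ j, ⟪w, EuclideanSpace.single j (1 : ℝ)⟫ • EuclideanSpace.single j (1 : ℝ) = w := by
    intro w
    simpa [real_inner_comm] using (EuclideanSpace.basisFun (Fin n) ℝ).sum_repr' w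
  simp only [laplacian, iteratedFDeriv_two_apply, hD.fderiv, _root_.sum_apply,
    ContinuousLinearMap.smulRight_apply]
  rw [sum_comm]
  refine sum_congr rfl fun i _ => ?_
  conv_rhs => rw [← hbasis (v i)]
  simp [mul_comm]

theorem radialGenerator_eq_sum_offDiag (s : Finset (EuclideanSpace ℝ (Fin n)))
    (k c b : EuclideanSpace ℝ (Fin n) → ℝ) (hc : ∀ γ ∈ s, c γ = 1 - 2 * k γ)
    (hcb : ∀ γ ∈ s, c γ * b γ = 0) {x : EuclideanSpace ℝ (Fin n)} (hx : ∀ γ ∈ s, ⟪γ, x⟫ ≠ 0)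
    {f : EuclideanSpace ℝ (Fin n) → ℝ}
    (hf : f =ᶠ[𝓝 x] fun y => Real.exp (sumLogInner s c y) * sumLogInner s b y) :
    1 / 2 * laplacian f x + ∑ γ ∈ s, k γ * ⟪gradient f x, γ⟫ / ⟪x, γ⟫ =
      Real.exp (sumLogInner s c x) * ∑ p ∈ s.offDiag,
        (c p.2 * (c p.1 * sumLogInner s b x + b p.1) / 2 + c p.1 * b p.2 / 2 +
          k p.1 * (c p.2 * sumLogInner s b x + b p.2)) * (⟪p.1, p.2⟫ / (⟪p.1, x⟫ * ⟪p.2, x⟫)) := by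
  have hx_nhds : ∀ᶠ y in 𝓝 x, ∀ γ ∈ s, ⟪γ, y⟫ ≠ 0 :=
    (Filter.eventually_all_finset s).2 fun γ hγ =>
      (innerSL ℝ γ).continuous.continuousAt.eventually_ne (hx γ hγ)
  have hderiv : ∀ᶠ y in 𝓝 x, HasFDerivAt f (∑ γ ∈ s, gradCoeff s c b γ y • innerSL ℝ γ) y := by
    filter_upwards [hf.eventuallyEq_nhds, hx_nhds] with y hfy hy
    exact (hasFDerivAt_exp_sumLogInner_mul c b hy).congr_of_eventuallyEq hfy
  rw [laplacian_eq_sum_of_eventually_hasFDerivAt s id (gradCoeff s c b) _ hderiv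
    fun γ hγ => hasFDerivAt_gradCoeff c b γ hx (hx γ hγ)]
  simp only [inner_gradient_left, hderiv.self_of_nhds.fderiv, id, sub_apply, smul_apply,
    _root_.sum_apply, innerSL_apply_apply, smul_eq_mul, gradCoeff]
  set G := Real.exp (sumLogInner s c x)
  set L := sumLogInner s b x
  rw [sum_offDiag_eq_sum_sum_erase, mul_sum, mul_sum, ← sum_add_distrib]
  refine sum_congr rfl fun γ hγ => ?_
  dsimp only
  have hsplit : ∀ α ∈ s.erase γ,
      G * ((c α * (c γ * L + b γ) / 2 + c γ * b α / 2 + k γ * (c α * L + b α)) *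
        (⟪γ, α⟫ / (⟪γ, x⟫ * ⟪α, x⟫))) =
      1 / 2 * (G * ((c α * (c γ * L + b γ) + c γ * b α) / (⟪α, x⟫ * ⟪γ, x⟫) * ⟪α, γ⟫)) +
        k γ * (G * (c α * L + b α) * ⟪α, x⟫⁻¹ * ⟪α, γ⟫) / ⟪γ, x⟫ := by
    intro α _
    rw [real_inner_comm γ α]
    ring
  rw [mul_sum (s.erase γ), sum_congr rfl hsplit, sum_add_distrib, ← mul_sum, ← sum_div,
    ← mul_sum, ← add_sum_erase _ _ hγ, ← add_sum_erase _ _ hγ, real_inner_comm γ x]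
  simp only [mul_assoc, ← mul_sum]
  -- the term `α = γ` carries the factor `(c γ u + c γ b γ) / 2 - u / 2 + k γ u`, `u = c γ L + b γ`
  linear_combination (G * ⟪γ, γ⟫ / (⟪γ, x⟫ * ⟪γ, x⟫)) *
    ((c γ * L + b γ) / 2 * hc γ hγ + 1 / 2 * hcb γ hγ)

end Generator

theorem prod_rpow_mul_log_prod_eventuallyEq {E : Type*} [NormedAddCommGroup E]
    [InnerProductSpace ℝ E] (s : Finset E) (k : E → ℝ) {x : E} (hx : ∀ γ ∈ s, 0 < ⟪γ, x⟫) :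
    (fun y => (∏ α ∈ s.filter (fun α => k α ≠ 1 / 2), ⟪α, y⟫ ^ (1 - 2 * k α)) *
        Real.log (∏ α ∈ s.filter (fun α => k α = 1 / 2), ⟪α, y⟫)) =ᶠ[𝓝 x]
      fun y => Real.exp (sumLogInner s (fun α => 1 - 2 * k α) y) *
        sumLogInner s (fun α => if k α = 1 / 2 then 1 else 0) y := by
  have hpos : ∀ᶠ y in 𝓝 x, ∀ γ ∈ s, 0 < ⟪γ, y⟫ :=
    (Filter.eventually_all_finset s).2 fun γ hγ =>
      (isOpen_lt continuous_const (innerSL ℝ γ).continuous).mem_nhds (hx γ hγ)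
  filter_upwards [hpos] with y hy
  congr 1
  · rw [sumLogInner, ← sum_filter_of_ne (p := fun α => k α ≠ 1 / 2), Real.exp_sum]
    · refine prod_congr rfl fun α hα => ?_
      rw [Real.rpow_def_of_pos (hy α (mem_filter.1 hα).1), mul_comm]
    · intro α _ h hk
      simp [hk] at h
  · rw [Real.log_prod fun α hα => (hy α (mem_filter.1 hα).1).ne', sumLogInner, sum_filter]
    refine sum_congr rfl fun α _ => ?_
    split_ifs <;> simp

theorem delta_bar_harmonic_for_radial_dunkl_general {n : ℕ}
    (R Rp : Finset (EuclideanSpace ℝ (Fin n)))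
    (hR : IsRootSystem R)
    (hRp : IsPositiveSubsystem R Rp)
    (k : EuclideanSpace ℝ (Fin n) → ℝ)
    (hkW : ∀ α ∈ R, ∀ β ∈ R, k (rootReflection β α) = k α) :
    ∀ x ∈ {x : EuclideanSpace ℝ (Fin n) | ∀ α ∈ Rp, 0 < ⟪α, x⟫},
      (1 / 2) * laplacian
          (fun y => (∏ α ∈ Rp.filter (fun α => k α ≠ 1 / 2), ⟪α, y⟫ ^ (1 - 2 * k α)) *
            Real.log (∏ α ∈ Rp.filter (fun α => k α = 1 / 2), ⟪α, y⟫)) x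
        + ∑ α ∈ Rp, k α *
            ⟪gradient (fun y =>
                (∏ α ∈ Rp.filter (fun α => k α ≠ 1 / 2), ⟪α, y⟫ ^ (1 - 2 * k α)) *
                  Real.log (∏ α ∈ Rp.filter (fun α => k α = 1 / 2), ⟪α, y⟫)) x, α⟫ / ⟪x, α⟫
        = 0 := by
  intro x hx
  have hx0 : ∀ γ ∈ Rp, ⟪γ, x⟫ ≠ 0 := fun γ hγ => (hx γ hγ).ne'
  have hcb : ∀ γ ∈ Rp, (1 - 2 * k γ) * (if k γ = 1 / 2 then 1 else 0) = 0 := fun γ _ => by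
    split_ifs with h <;> simp [h]
  rw [radialGenerator_eq_sum_offDiag Rp k _ _ (fun _ _ => rfl) hcb hx0
      (prod_rpow_mul_log_prod_eventuallyEq Rp k hx),
    sum_offDiag_mul_inner_div_eq_zero hR hRp _ ?_ hx0, mul_zero]
  intro δ hδ α hα β hβ
  simp only [apply_posReflect_eq hR hkW (hRp.1 hδ) (hRp.1 hα),
    apply_posReflect_eq hR hkW (hRp.1 hδ) (hRp.1 hβ)]

/-- The function
`δ̄(x) = (∏_{α ∈ R₊, k(α) ≠ 1/2} ⟨α,x⟩^(1-2k(α))) · log (∏_{α ∈ R₊, k(α) = 1/2} ⟨α,x⟩)`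
is harmonic on the Weyl chamber `C` for the radial Dunkl generator. -/
theorem delta_bar_harmonic_for_radial_dunkl {n : ℕ}
    (R Rp : Finset (EuclideanSpace ℝ (Fin n)))
    (hR : IsRootSystem R) (hnorm : ∀ α ∈ R, ⟪α, α⟫ = (2 : ℝ))
    (hRp : IsPositiveSubsystem R Rp)
    (k : EuclideanSpace ℝ (Fin n) → ℝ)
    (hk0 : ∀ α ∈ R, 0 ≤ k α)
    (hkW : ∀ α ∈ R, ∀ β ∈ R, k (rootReflection β α) = k α) :
    ∀ x ∈ {x : EuclideanSpace ℝ (Fin n) | ∀ α ∈ Rp, 0 < ⟪α, x⟫},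
      (1 / 2) * laplacian
          (fun y => (∏ α ∈ Rp.filter (fun α => k α ≠ 1 / 2), ⟪α, y⟫ ^ (1 - 2 * k α)) *
            Real.log (∏ α ∈ Rp.filter (fun α => k α = 1 / 2), ⟪α, y⟫)) x
        + ∑ α ∈ Rp, k α *
            ⟪gradient (fun y =>
                (∏ α ∈ Rp.filter (fun α => k α ≠ 1 / 2), ⟪α, y⟫ ^ (1 - 2 * k α)) *
                  Real.log (∏ α ∈ Rp.filter (fun α => k α = 1 / 2), ⟪α, y⟫)) x, α⟫ / ⟪x, α⟫
        = 0 :=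
  delta_bar_harmonic_for_radial_dunkl_general R Rp hR hRp k hkW
end

section
/- Let R be a normalized root system in ℝⁿ with positive subsystem R₊ and k : R → [0,∞), and define the vector field F(x) = Σ_{α∈R₊} (k(α)/⟨x,α⟩)·α on the Weyl chamber C (so F = ∇log ϖ_k with ϖ_k(x) = ∏_{α∈R₊} ⟨α,x⟩^{k(α)}). Fix T > 0, a continuous path b : [0,T] → ℝⁿ, and x_0 ∈ C. If X, Y : [0,T] → C are continuous and satisfy X_t = x_0 + b_t + ∫_0^t F(X_s) ds and Y_t = x_0 + b_t + ∫_0^t F(Y_s) ds for all t ∈ [0,T], then X_t = Y_t for all t ∈ [0,T]. -/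
open scoped RealInnerProductSpace BigOperators

/-!
The drift `F = ∇ log ϖ_k` is dissipative on the Weyl chamber: `⟨x - y, F x - F y⟩ ≤ 0`, since
each root contributes `k(α) (1/⟨x,α⟩ - 1/⟨y,α⟩) (⟨x,α⟩ - ⟨y,α⟩) ≤ 0`. The noise `b` cancels in
`X - Y`, so `‖X_t - Y_t‖²` is differentiable with derivative `2 ⟨X - Y, F X - F Y⟩ ≤ 0`; it is
therefore nonincreasing, and it vanishes at `t = 0`.
-/

open Set MeasureTheory

variable {E : Type*} [NormedAddCommGroup E] [InnerProductSpace ℝ E]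

section Dissipative

variable [CompleteSpace E]

theorem eqOn_zero_of_eq_integral_of_inner_nonpos {Z g : ℝ → E} {T : ℝ}
    (hg : ContinuousOn g (Icc 0 T)) (hZ : ∀ t ∈ Icc 0 T, Z t = ∫ s in (0 : ℝ)..t, g s)
    (hZg : ∀ t ∈ Ioo 0 T, ⟪Z t, g t⟫ ≤ 0) : EqOn Z 0 (Icc 0 T) := by
  intro t ht
  have hT : 0 ≤ T := ht.1.trans ht.2
  have hZcont : ContinuousOn Z (Icc 0 T) := by
    rw [← uIcc_of_le hT] at hg ⊢
    exact (intervalIntegral.continuousOn_primitive_interval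
      (hg.integrableOn_compact isCompact_uIcc)).congr fun u hu => hZ u (uIcc_of_le hT ▸ hu)
  have hZderiv : ∀ u ∈ Ioo 0 T, HasDerivAt Z (g u) u := by
    intro u hu
    have hint : IntervalIntegrable g volume 0 u :=
      (hg.mono (Icc_subset_Icc le_rfl hu.2.le)).intervalIntegrable_of_Icc hu.1.le
    have hmeas : StronglyMeasurableAtFilter g (nhds u) :=
      (hg.mono Ioo_subset_Icc_self).stronglyMeasurableAtFilter isOpen_Ioo u hu
    have hgu : ContinuousAt g u := (hg u (Ioo_subset_Icc_self hu)).continuousAt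
      (Icc_mem_nhds hu.1 hu.2)
    refine (intervalIntegral.integral_hasDerivAt_right hint hmeas hgu).congr_of_eventuallyEq ?_
    filter_upwards [Ioo_mem_nhds hu.1 hu.2] with v hv using hZ v (Ioo_subset_Icc_self hv)
  have hanti : AntitoneOn (‖Z ·‖ ^ 2) (Icc 0 T) := by
    refine antitoneOn_of_hasDerivWithinAt_nonpos (convex_Icc 0 T)
      (hZcont.norm.pow 2) (f' := fun u => 2 * ⟪Z u, g u⟫) ?_ ?_ <;> rw [interior_Icc]
    · exact fun u hu => (hZderiv u hu).norm_sq.hasDerivWithinAt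
    · exact fun u hu => mul_nonpos_of_nonneg_of_nonpos zero_le_two (hZg u hu)
  have hZ0 : Z 0 = 0 := by simpa using hZ 0 ⟨le_rfl, hT⟩
  have : ‖Z t‖ ^ 2 ≤ ‖Z 0‖ ^ 2 := hanti ⟨le_rfl, hT⟩ ht ht.1
  simpa [hZ0] using this

theorem eqOn_of_eq_integral_of_dissipative {F : E → E} {S : Set E} (hF : ContinuousOn F S)
    (hFS : ∀ x ∈ S, ∀ y ∈ S, ⟪x - y, F x - F y⟫ ≤ 0) {c X Y : ℝ → E} {T : ℝ}
    (hXcont : ContinuousOn X (Icc 0 T)) (hYcont : ContinuousOn Y (Icc 0 T))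
    (hXS : MapsTo X (Icc 0 T) S) (hYS : MapsTo Y (Icc 0 T) S)
    (hX : ∀ t ∈ Icc 0 T, X t = c t + ∫ s in (0 : ℝ)..t, F (X s))
    (hY : ∀ t ∈ Icc 0 T, Y t = c t + ∫ s in (0 : ℝ)..t, F (Y s)) :
    EqOn X Y (Icc 0 T) := by
  have hFX : ContinuousOn (fun s => F (X s)) (Icc 0 T) := hF.comp hXcont hXS
  have hFY : ContinuousOn (fun s => F (Y s)) (Icc 0 T) := hF.comp hYcont hYS
  have hXY : ∀ t ∈ Icc 0 T, X t - Y t = ∫ s in (0 : ℝ)..t, (F (X s) - F (Y s)) := by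
    intro t ht
    have hsub : uIcc 0 t ⊆ Icc 0 T := uIcc_of_le ht.1 ▸ Icc_subset_Icc le_rfl ht.2
    rw [intervalIntegral.integral_sub ((hFX.mono hsub).intervalIntegrable)
      ((hFY.mono hsub).intervalIntegrable), hX t ht, hY t ht, add_sub_add_left_eq_sub]
  intro t ht
  refine sub_eq_zero.mp (eqOn_zero_of_eq_integral_of_inner_nonpos (hFX.sub hFY) hXY ?_ ht)
  exact fun u hu => hFS _ (hXS (Ioo_subset_Icc_self hu)) _ (hYS (Ioo_subset_Icc_self hu))

end Dissipative

theorem div_sub_div_mul_sub_nonpos {k a b : ℝ} (hk : 0 ≤ k) (ha : 0 < a) (hb : 0 < b) :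
    (k / a - k / b) * (a - b) ≤ 0 := by
  rcases le_total a b with hab | hab
  · exact mul_nonpos_of_nonneg_of_nonpos
      (sub_nonneg.mpr (div_le_div_of_nonneg_left hk ha hab)) (sub_nonpos.mpr hab)
  · exact mul_nonpos_of_nonpos_of_nonneg
      (sub_nonpos.mpr (div_le_div_of_nonneg_left hk hb hab)) (sub_nonneg.mpr hab)

def weylChamber (Rp : Finset E) : Set E := {z | ∀ α ∈ Rp, 0 < ⟪α, z⟫}

noncomputable def radialDunklDrift (Rp : Finset E) (k : E → ℝ) (x : E) : E :=
  ∑ α ∈ Rp, (k α / ⟪x, α⟫) • α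

theorem continuousOn_radialDunklDrift (Rp : Finset E) (k : E → ℝ) :
    ContinuousOn (radialDunklDrift Rp k) (weylChamber Rp) :=
  continuousOn_finsetSum _ fun α hα =>
    (continuousOn_const.div (continuousOn_id.inner continuousOn_const) fun x hx =>
      (real_inner_comm α x ▸ hx α hα).ne').smul continuousOn_const

theorem inner_sub_radialDunklDrift_sub_nonpos {Rp : Finset E} {k : E → ℝ}
    (hk : ∀ α ∈ Rp, 0 ≤ k α) {x y : E} (hx : x ∈ weylChamber Rp) (hy : y ∈ weylChamber Rp) :
    ⟪x - y, radialDunklDrift Rp k x - radialDunklDrift Rp k y⟫ ≤ 0 := by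
  simp only [radialDunklDrift, ← Finset.sum_sub_distrib, ← sub_smul, inner_sum,
    real_inner_smul_right]
  refine Finset.sum_nonpos fun α hα => ?_
  rw [inner_sub_left]
  exact div_sub_div_mul_sub_nonpos (hk α hα) (real_inner_comm α x ▸ hx α hα)
    (real_inner_comm α y ▸ hy α hα)

theorem radial_dunkl_drift_pathwise_uniqueness_general {n : ℕ}
    (R Rp : Finset (EuclideanSpace ℝ (Fin n)))
    (hRp : IsPositiveSubsystem R Rp)
    (k : EuclideanSpace ℝ (Fin n) → ℝ) (hk0 : ∀ α ∈ R, 0 ≤ k α)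
    (T : ℝ)
    (b : ℝ → EuclideanSpace ℝ (Fin n))
    (x₀ : EuclideanSpace ℝ (Fin n))
    (X Y : ℝ → EuclideanSpace ℝ (Fin n))
    (hXcont : ContinuousOn X (Set.Icc 0 T)) (hYcont : ContinuousOn Y (Set.Icc 0 T))
    (hXC : ∀ t ∈ Set.Icc (0 : ℝ) T, X t ∈ {z : EuclideanSpace ℝ (Fin n) | ∀ α ∈ Rp, 0 < ⟪α, z⟫})
    (hYC : ∀ t ∈ Set.Icc (0 : ℝ) T, Y t ∈ {z : EuclideanSpace ℝ (Fin n) | ∀ α ∈ Rp, 0 < ⟪α, z⟫})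
    (hX : ∀ t ∈ Set.Icc (0 : ℝ) T,
      X t = x₀ + b t + ∫ s in (0 : ℝ)..t, ∑ α ∈ Rp, (k α / ⟪X s, α⟫) • α)
    (hY : ∀ t ∈ Set.Icc (0 : ℝ) T,
      Y t = x₀ + b t + ∫ s in (0 : ℝ)..t, ∑ α ∈ Rp, (k α / ⟪Y s, α⟫) • α) :
    ∀ t ∈ Set.Icc (0 : ℝ) T, X t = Y t :=
  eqOn_of_eq_integral_of_dissipative (continuousOn_radialDunklDrift Rp k)
    (fun _ hx _ hy =>
      inner_sub_radialDunklDrift_sub_nonpos (fun α hα => hk0 α (hRp.1 hα)) hx hy)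
    (c := fun t => x₀ + b t) hXcont hYcont hXC hYC hX hY

/-- Pathwise uniqueness for the integral equation `X_t = x₀ + b_t + ∫₀ᵗ F(X_s) ds` on `[0,T]`,
where `F = ∇ log ϖ_k` is the radial Dunkl drift `F(x) = Σ_{α ∈ R₊} (k(α)/⟨x,α⟩) α` on the Weyl
chamber `C`. -/
theorem radial_dunkl_drift_pathwise_uniqueness {n : ℕ}
    (R Rp : Finset (EuclideanSpace ℝ (Fin n)))
    (hR : IsRootSystem R) (hnorm : ∀ α ∈ R, ⟪α, α⟫ = (2 : ℝ))
    (hRp : IsPositiveSubsystem R Rp)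
    (k : EuclideanSpace ℝ (Fin n) → ℝ) (hk0 : ∀ α ∈ R, 0 ≤ k α)
    (T : ℝ) (hT : 0 < T)
    (b : ℝ → EuclideanSpace ℝ (Fin n)) (hb : ContinuousOn b (Set.Icc 0 T))
    (x₀ : EuclideanSpace ℝ (Fin n))
    (hx₀ : x₀ ∈ {z : EuclideanSpace ℝ (Fin n) | ∀ α ∈ Rp, 0 < ⟪α, z⟫})
    (X Y : ℝ → EuclideanSpace ℝ (Fin n))
    (hXcont : ContinuousOn X (Set.Icc 0 T)) (hYcont : ContinuousOn Y (Set.Icc 0 T))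
    (hXC : ∀ t ∈ Set.Icc (0 : ℝ) T, X t ∈ {z : EuclideanSpace ℝ (Fin n) | ∀ α ∈ Rp, 0 < ⟪α, z⟫})
    (hYC : ∀ t ∈ Set.Icc (0 : ℝ) T, Y t ∈ {z : EuclideanSpace ℝ (Fin n) | ∀ α ∈ Rp, 0 < ⟪α, z⟫})
    (hX : ∀ t ∈ Set.Icc (0 : ℝ) T,
      X t = x₀ + b t + ∫ s in (0 : ℝ)..t, ∑ α ∈ Rp, (k α / ⟪X s, α⟫) • α)
    (hY : ∀ t ∈ Set.Icc (0 : ℝ) T,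
      Y t = x₀ + b t + ∫ s in (0 : ℝ)..t, ∑ α ∈ Rp, (k α / ⟪Y s, α⟫) • α) :
    ∀ t ∈ Set.Icc (0 : ℝ) T, X t = Y t :=
  radial_dunkl_drift_pathwise_uniqueness_general R Rp hRp k hk0 T b x₀ X Y hXcont hYcont hXC hYC hX
    hY
end
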